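/- Let S and T be semigroups and let U be a subdirect product of S and T, i.e. a subsemigroup of S × T such that the coordinate projections π_S : U → S and π_T : U → T are surjective. Then there exist a semigroup F and surjective homomorphisms φ : S → F, ψ : T → F with U = {(s,t) ∈ S × T : φ(s) = ψ(t)} if and only if the kernel congruences of the projections commute: ker π_S ∘ ker π_T = ker π_T ∘ ker π_S. -/

import Mathlib

/-!
Both conditions are equivalent to `U` being a *difunctional* relation: whenever `(s, t')`, `(s', t')`
and `(s', t)` lie in `U`, so does `(s, t)`. A fiber product is clearly difunctional. Conversely, if
`U` is difunctional, then relating `s` and `s'` when they share a partner `t` with `(s, t), (s', t) ∈ U`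
is an equivalence (transitivity is difunctionality), compatible with multiplication because `U` is a
subsemigroup; take `F` to be the quotient of `S` by this congruence, `φ` the quotient map and `ψ t` the
class of any partner of `t`.
-/

universe u v

variable {S : Type u} {T : Type v}

def IsDifunctional (U : Set (S × T)) : Prop :=
  ∀ ⦃s s' : S⦄ ⦃t t' : T⦄, (s, t') ∈ U → (s', t') ∈ U → (s', t) ∈ U → (s, t) ∈ U

theorem isDifunctional_fiber {F : Type*} (φ : S → F) (ψ : T → F) :
    IsDifunctional {p : S × T | φ p.1 = ψ p.2} := by
  intro s s' t t' h₁ h₂ h₃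
  simp only [Set.mem_ofPred_eq] at *
  rw [h₁, ← h₂, h₃]

section KernelComposition

variable {U : Set (S × T)}

theorem comp_ker_fst_ker_snd_iff (u w : U) :
    Relation.Comp (fun u v : U => (u : S × T).1 = (v : S × T).1)
      (fun u v : U => (u : S × T).2 = (v : S × T).2) u w ↔ ((u : S × T).1, (w : S × T).2) ∈ U :=
  ⟨fun ⟨v, h₁, h₂⟩ => h₁ ▸ h₂ ▸ v.2, fun h => ⟨⟨_, h⟩, rfl, rfl⟩⟩

theorem comp_ker_snd_ker_fst_iff (u w : U) :
    Relation.Comp (fun u v : U => (u : S × T).2 = (v : S × T).2)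
      (fun u v : U => (u : S × T).1 = (v : S × T).1) u w ↔ ((w : S × T).1, (u : S × T).2) ∈ U :=
  ⟨fun ⟨v, h₁, h₂⟩ => h₂ ▸ h₁ ▸ v.2, fun h => ⟨⟨_, h⟩, rfl, rfl⟩⟩

theorem comp_ker_fst_ker_snd_comm_iff_isDifunctional :
    Relation.Comp (fun u v : U => (u : S × T).1 = (v : S × T).1)
        (fun u v : U => (u : S × T).2 = (v : S × T).2) =
      Relation.Comp (fun u v : U => (u : S × T).2 = (v : S × T).2)
        (fun u v : U => (u : S × T).1 = (v : S × T).1) ↔ IsDifunctional U := by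
  simp only [funext_iff, eq_iff_iff, comp_ker_fst_ker_snd_iff, comp_ker_snd_ker_fst_iff]
  constructor
  · intro h s s' t t' h₁ h₂ h₃
    exact (h ⟨_, h₁⟩ ⟨_, h₃⟩).2 h₂
  · intro hU u w
    exact ⟨fun h => hU w.2 h u.2, fun h => hU u.2 h w.2⟩

end KernelComposition

namespace IsDifunctional

variable [Semigroup S] [Semigroup T] {U : Subsemigroup (S × T)}

def leftCon (hU : IsDifunctional (U : Set (S × T))) (hS : ∀ s, ∃ t, (s, t) ∈ U) : Con S where
  r s s' := ∃ t, (s, t) ∈ U ∧ (s', t) ∈ U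
  iseqv :=
    { refl s := let ⟨t, h⟩ := hS s; ⟨t, h, h⟩
      symm := fun ⟨t, h₁, h₂⟩ => ⟨t, h₂, h₁⟩
      trans := fun ⟨_, h₁, h₂⟩ ⟨t, h₃, h₄⟩ => ⟨t, hU h₁ h₂ h₃, h₄⟩ }
  mul' := fun ⟨t, h₁, h₂⟩ ⟨t', h₃, h₄⟩ => ⟨t * t', U.mul_mem h₁ h₃, U.mul_mem h₂ h₄⟩

variable (hU : IsDifunctional (U : Set (S × T))) (hS : ∀ s, ∃ t, (s, t) ∈ U)
  (hT : ∀ t, ∃ s, (s, t) ∈ U)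
include hU hS hT

noncomputable def rightHom : T →ₙ* (hU.leftCon hS).Quotient where
  toFun t := ((hT t).choose : (hU.leftCon hS).Quotient)
  map_mul' a b := by
    rw [← Con.coe_mul, Con.eq]
    exact ⟨a * b, (hT _).choose_spec, U.mul_mem (hT a).choose_spec (hT b).choose_spec⟩

theorem mem_iff_mkMulHom_eq_rightHom (p : S × T) :
    p ∈ U ↔ (hU.leftCon hS).mkMulHom p.1 = hU.rightHom hS hT p.2 := by
  refine ⟨fun hp => (Con.eq _).2 ⟨p.2, hp, (hT p.2).choose_spec⟩, fun hp => ?_⟩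
  obtain ⟨t, h₁, h₂⟩ := (Con.eq _).1 hp
  exact hU h₁ h₂ (hT p.2).choose_spec

theorem rightHom_surjective : Function.Surjective (hU.rightHom hS hT) := by
  rintro ⟨s⟩
  obtain ⟨t, hst⟩ := hS s
  exact ⟨t, ((hU.mem_iff_mkMulHom_eq_rightHom hS hT (s, t)).1 hst).symm⟩

theorem exists_fiber_eq :
    ∃ (F : Type u) (_ : Semigroup F) (φ : S →ₙ* F) (ψ : T →ₙ* F),
      Function.Surjective φ ∧ Function.Surjective ψ ∧ ∀ p : S × T, p ∈ U ↔ φ p.1 = ψ p.2 :=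
  ⟨_, inferInstance, (hU.leftCon hS).mkMulHom, hU.rightHom hS hT, Quotient.mk''_surjective,
    hU.rightHom_surjective hS hT, hU.mem_iff_mkMulHom_eq_rightHom hS hT⟩

end IsDifunctional

/-- Fleischer's Lemma for semigroups: a subdirect product
`U ≤ S × T` is a fiber product (i.e. equals `{(s,t) : φ(s) = ψ(t)}` for some
semigroup `F` and surjective homomorphisms `φ : S → F`, `ψ : T → F`) if and
only if the kernel congruences of the two coordinate projections of `U`
commute under relational composition. -/
theorem stmt19 {S T : Type} [Semigroup S] [Semigroup T]
    (U : Subsemigroup (S × T))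
    (hS : ∀ s : S, ∃ u ∈ U, u.1 = s) (hT : ∀ t : T, ∃ u ∈ U, u.2 = t) :
    (∃ (F : Type) (_ : Semigroup F) (φ : S →ₙ* F) (ψ : T →ₙ* F),
        Function.Surjective φ ∧ Function.Surjective ψ ∧
        ∀ p : S × T, p ∈ U ↔ φ p.1 = ψ p.2) ↔
      Relation.Comp (fun u v : U => (u : S × T).1 = (v : S × T).1)
          (fun u v : U => (u : S × T).2 = (v : S × T).2) =
        Relation.Comp (fun u v : U => (u : S × T).2 = (v : S × T).2)
          (fun u v : U => (u : S × T).1 = (v : S × T).1) := by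
  refine Iff.trans ?_
    (comp_ker_fst_ker_snd_comm_iff_isDifunctional (U := (U : Set (S × T)))).symm
  constructor
  · rintro ⟨F, _, φ, ψ, -, -, hφψ⟩
    have hU : (U : Set (S × T)) = {p | φ p.1 = ψ p.2} := Set.ext hφψ
    exact hU ▸ isDifunctional_fiber φ ψ
  · intro hU
    refine hU.exists_fiber_eq (fun s => ?_) (fun t => ?_)
    · obtain ⟨u, hu, rfl⟩ := hS s
      exact ⟨u.2, hu⟩
    · obtain ⟨u, hu, rfl⟩ := hT t
      exact ⟨u.1, hu⟩
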